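/- arXiv:2209.09581 — 5 statements merged into one kernel-verified Lean document; each statement's English description precedes it below -/
import Mathlib

section
/- Let (ν(i))_{i≥0} be a non-negative decreasing-ratio sequence, i.e., ν(i)/(i+1) is decreasing in i (which holds in particular if ν is decreasing and non-negative). Then for non-negative integers h, h' with 2h ≤ h', one has ∑_{i=2h}^{h'} ν(i) ≤ (∑_{i=h}^{h'} sqrt(ν(i)/(i+1)))^2. -/
/-!
Put `s i = √(ν i / (i + 1))`, an antitone sequence with `ν i = (i + 1) * s i ^ 2`, and induct on
`h'`. Passing from `n` to `n + 1` adds `(n + 2) * s (n + 1) ^ 2` on the left and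
`2 * S * s (n + 1) + s (n + 1) ^ 2` on the right, where `S = ∑_{i=h}^{n} s i ≥ (n + 1 - h) * s (n + 1)`
by antitonicity; `2 * h ≤ n` gives `2 * (n + 1 - h) + 1 ≥ n + 2`.
-/

open Finset

section
variable {R : Type*} [CommRing R] [LinearOrder R] [IsStrictOrderedRing R] {s : ℕ → R}

theorem card_mul_le_sum_Icc_of_antitone (hs : Antitone s) (h m : ℕ) :
    ((m + 1 - h : ℕ) : R) * s m ≤ ∑ i ∈ Icc h m, s i := by
  rw [← Nat.card_Icc, ← nsmul_eq_mul]
  exact card_nsmul_le_sum _ _ _ fun i hi => hs (mem_Icc.mp hi).2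

theorem sum_Icc_mul_sq_le_sq_sum_Icc (hs0 : ∀ i, 0 ≤ s i) (hs : Antitone s) {h H : ℕ}
    (hH : 2 * h ≤ H) :
    ∑ i ∈ Icc (2 * h) H, ((i : R) + 1) * s i ^ 2 ≤ (∑ i ∈ Icc h H, s i) ^ 2 := by
  induction H, hH using Nat.le_induction with
  | base =>
    have hsum := card_mul_le_sum_Icc_of_antitone (R := R) hs h (2 * h)
    rw [show 2 * h + 1 - h = h + 1 by omega] at hsum
    calc ∑ i ∈ Icc (2 * h) (2 * h), ((i : R) + 1) * s i ^ 2
        = (2 * h + 1) * s (2 * h) ^ 2 := by simp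
      _ ≤ ((h + 1) * s (2 * h)) ^ 2 := by nlinarith [sq_nonneg ((h : R) * s (2 * h))]
      _ ≤ (∑ i ∈ Icc h (2 * h), s i) ^ 2 := by
        push_cast at hsum
        exact pow_le_pow_left₀ (mul_nonneg (by positivity) (hs0 _)) hsum 2
  | succ n hn ih =>
    rw [sum_Icc_succ_top (by omega), sum_Icc_succ_top (by omega)]
    have hsum : ((n + 1 - h : ℕ) : R) * s (n + 1) ≤ ∑ i ∈ Icc h n, s i :=
      (mul_le_mul_of_nonneg_left (hs n.le_succ) (Nat.cast_nonneg _)).trans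
        (card_mul_le_sum_Icc_of_antitone hs h n)
    have hcard : ((n : R) + 1 + 1) ≤ 2 * ((n + 1 - h : ℕ) : R) + 1 := by
      rw [Nat.cast_sub (by omega)]; push_cast
      have : (2 * h : R) ≤ n := by exact_mod_cast hn
      linarith
    push_cast
    nlinarith [mul_le_mul_of_nonneg_right hsum (hs0 (n + 1)),
      mul_le_mul_of_nonneg_right hcard (sq_nonneg (s (n + 1)))]

end

theorem stmt1 (ν : ℕ → ℝ) (hnonneg : ∀ i, 0 ≤ ν i)
    (hdec : ∀ i j, j ≤ i → ν i / ((i : ℝ) + 1) ≤ ν j / ((j : ℝ) + 1))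
    (h h' : ℕ) (hh : 2 * h ≤ h') :
    ∑ i ∈ Finset.Icc (2 * h) h', ν i ≤
      (∑ i ∈ Finset.Icc h h', Real.sqrt (ν i / ((i : ℝ) + 1))) ^ 2 := by
  have hν : ∀ i, ν i = ((i : ℝ) + 1) * √(ν i / ((i : ℝ) + 1)) ^ 2 := fun i => by
    rw [Real.sq_sqrt (div_nonneg (hnonneg i) (by positivity))]
    field_simp
  calc ∑ i ∈ Icc (2 * h) h', ν i
      = ∑ i ∈ Icc (2 * h) h', ((i : ℝ) + 1) * √(ν i / ((i : ℝ) + 1)) ^ 2 :=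
        sum_congr rfl fun i _ => hν i
    _ ≤ _ := sum_Icc_mul_sq_le_sq_sum_Icc (fun _ => Real.sqrt_nonneg _)
        (fun j i hji => Real.sqrt_le_sqrt (hdec i j hji)) hh
end

section
/- Let (ω(i))_{i≥0} be a non-negative sequence with ω(i) ≤ c·e^{-ξ i} for all i ≥ 0, where c > 0 and 0 < ξ ≤ 1. Then ∑_{i=0}^∞ sqrt(ω(i)/(i+1)) ≤ 9·sqrt(c/ξ). -/
open Real Finset

/-! With `r = e^{-ξ/2}` we have `√ω(i) ≤ √c · rⁱ`, so it suffices to bound `∑ rⁱ/√(i+1)`.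
Split at `N = ⌊1/ξ⌋`: the first `N` terms are at most `∑_{i<N} 1/√(i+1) ≤ 2√N ≤ 2/√ξ`, and the
remaining ones are at most `rⁱ/√(N+1) ≤ √ξ rⁱ`, a geometric tail bounded by `√ξ/(1-r) ≤ 3/√ξ`
since `1 - e^{-t} ≥ t/(1+t)`. -/

lemma inv_one_sub_exp_neg_le {t : ℝ} (ht : 0 < t) : (1 - exp (-t))⁻¹ ≤ 1 + t⁻¹ := by
  have hexp : exp (-t) ≤ (1 + t)⁻¹ := by
    rw [exp_neg]
    exact inv_anti₀ (by positivity) (by linarith [add_one_le_exp t])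
  have hlow : t / (1 + t) ≤ 1 - exp (-t) := by
    have : t / (1 + t) = 1 - (1 + t)⁻¹ := by field_simp; ring
    linarith
  calc (1 - exp (-t))⁻¹ ≤ (t / (1 + t))⁻¹ := inv_anti₀ (by positivity) hlow
    _ = 1 + t⁻¹ := by field_simp; ring

lemma sum_range_inv_sqrt_succ_le (N : ℕ) : ∑ i ∈ range N, (√(i + 1))⁻¹ ≤ 2 * √N := by
  induction N with
  | zero => simp
  | succ N ih =>
    have hN : (0 : ℝ) ≤ N := N.cast_nonneg
    have hpos : 0 < √(N + 1) := sqrt_pos.2 (by positivity)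
    have step : (√(N + 1))⁻¹ ≤ 2 * √(N + 1) - 2 * √N := by
      -- after clearing the denominator this is `(√(N+1) - √N)² ≥ 0`
      rw [inv_le_iff_one_le_mul₀ hpos]
      nlinarith [sq_nonneg (√(N + 1) - √N), sq_sqrt hN, sq_sqrt (by positivity : (0 : ℝ) ≤ N + 1)]
    rw [sum_range_succ, Nat.cast_succ]
    linarith

lemma summable_pow_div_sqrt_succ {r : ℝ} (hr0 : 0 ≤ r) (hr1 : r < 1) :
    Summable fun i : ℕ => r ^ i / √(i + 1) := by
  refine (summable_geometric_of_lt_one hr0 hr1).of_nonneg_of_le (fun i => by positivity) fun i => ?_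
  exact div_le_self (by positivity) (one_le_sqrt.2 (by linarith [i.cast_nonneg (α := ℝ)]))

lemma tsum_pow_div_sqrt_succ_le {r : ℝ} (hr0 : 0 ≤ r) (hr1 : r < 1) (N : ℕ) :
    ∑' i : ℕ, r ^ i / √(i + 1) ≤ 2 * √N + (√(N + 1))⁻¹ * (1 - r)⁻¹ := by
  have hs := summable_pow_div_sqrt_succ hr0 hr1
  have hhead : ∑ i ∈ range N, r ^ i / √(i + 1) ≤ 2 * √N := by
    refine (sum_le_sum fun i _ => ?_).trans (sum_range_inv_sqrt_succ_le N)
    rw [div_eq_mul_inv]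
    exact mul_le_of_le_one_left (by positivity) (pow_le_one₀ hr0 hr1.le)
  have hterm (i : ℕ) : r ^ (i + N) / √((i + N : ℕ) + 1) ≤ (√(N + 1))⁻¹ * r ^ i := by
    rw [← div_eq_inv_mul]
    refine div_le_div₀ (by positivity) (pow_le_pow_of_le_one hr0 hr1.le (by omega))
      (sqrt_pos.2 (by positivity)) (sqrt_le_sqrt ?_)
    push_cast
    linarith [i.cast_nonneg (α := ℝ)]
  have htail : ∑' i : ℕ, r ^ (i + N) / √((i + N : ℕ) + 1) ≤ (√(N + 1))⁻¹ * (1 - r)⁻¹ := by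
    rw [← tsum_geometric_of_lt_one hr0 hr1, ← tsum_mul_left]
    exact ((summable_nat_add_iff N).2 hs).tsum_le_tsum hterm
      ((summable_geometric_of_lt_one hr0 hr1).mul_left _)
  rw [← hs.sum_add_tsum_nat_add N]
  exact add_le_add hhead htail

lemma tsum_exp_neg_half_mul_pow_div_sqrt_succ_le {ξ : ℝ} (hξ : 0 < ξ) (hξ1 : ξ ≤ 1) :
    ∑' i : ℕ, exp (-(ξ / 2)) ^ i / √(i + 1) ≤ 5 / √ξ := by
  set N := ⌊ξ⁻¹⌋₊
  have hN : (N : ℝ) ≤ ξ⁻¹ := Nat.floor_le (by positivity)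
  have hN1 : ξ⁻¹ < N + 1 := Nat.lt_floor_add_one _
  have hsξ : 0 < √ξ := sqrt_pos.2 hξ
  have hhead : 2 * √N ≤ 2 / √ξ := by
    rw [div_eq_mul_inv, ← sqrt_inv]
    gcongr
  have hr1 : exp (-(ξ / 2)) < 1 := exp_lt_one_iff.2 (by linarith)
  have hexp : (1 - exp (-(ξ / 2)))⁻¹ ≤ 3 / ξ := by
    refine (inv_one_sub_exp_neg_le (half_pos hξ)).trans ?_
    rw [inv_div, le_div_iff₀ hξ, add_mul, div_mul_cancel₀ _ hξ.ne']
    linarith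
  have hsqrt : (√(N + 1))⁻¹ ≤ √ξ := by
    rw [inv_le_comm₀ (sqrt_pos.2 (by positivity)) hsξ, ← sqrt_inv]
    exact sqrt_le_sqrt hN1.le
  have htail : (√(N + 1))⁻¹ * (1 - exp (-(ξ / 2)))⁻¹ ≤ 3 / √ξ := by
    calc (√(N + 1))⁻¹ * (1 - exp (-(ξ / 2)))⁻¹ ≤ √ξ * (3 / ξ) := by
          gcongr
      _ = 3 / √ξ := by
        field_simp
        rw [sq_sqrt hξ.le]
  calc ∑' i : ℕ, exp (-(ξ / 2)) ^ i / √(i + 1)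
      ≤ 2 * √N + (√(N + 1))⁻¹ * (1 - exp (-(ξ / 2)))⁻¹ :=
        tsum_pow_div_sqrt_succ_le (exp_pos _).le hr1 N
    _ ≤ 5 / √ξ := by linarith [add_div 2 3 √ξ]

theorem stmt2_general (ω : ℕ → ℝ) (c ξ : ℝ) (hc : 0 < c) (hξ : 0 < ξ) (hξ1 : ξ ≤ 1)
    (hb : ∀ i : ℕ, ω i ≤ c * Real.exp (-ξ * i)) :
    Summable (fun i : ℕ => Real.sqrt (ω i / ((i : ℝ) + 1))) ∧
      ∑' i : ℕ, Real.sqrt (ω i / ((i : ℝ) + 1)) ≤ 9 * Real.sqrt (c / ξ) := by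
  set r := exp (-(ξ / 2))
  have hdom (i : ℕ) : √(ω i / (i + 1)) ≤ √c * (r ^ i / √(i + 1)) := by
    have hsqrt_exp : √(exp (-ξ * i)) = r ^ i := by
      rw [← exp_half, ← exp_nat_mul]
      ring_nf
    calc √(ω i / (i + 1)) ≤ √(c * exp (-ξ * i) / (i + 1)) := by gcongr; exact hb i
      _ = √c * (r ^ i / √(i + 1)) := by
        rw [sqrt_div' _ (by positivity), sqrt_mul hc.le, hsqrt_exp, mul_div_assoc]
  have hg : Summable fun i : ℕ => √c * (r ^ i / √(i + 1)) :=
    (summable_pow_div_sqrt_succ (exp_pos _).le (exp_lt_one_iff.2 (by linarith))).mul_left _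
  have hf : Summable fun i : ℕ => √(ω i / (i + 1)) :=
    hg.of_nonneg_of_le (fun i => sqrt_nonneg _) hdom
  refine ⟨hf, ?_⟩
  calc ∑' i : ℕ, √(ω i / (i + 1)) ≤ √c * ∑' i : ℕ, r ^ i / √(i + 1) := by
        rw [← tsum_mul_left]
        exact hf.tsum_le_tsum hdom hg
    _ ≤ √c * (5 / √ξ) := by gcongr; exact tsum_exp_neg_half_mul_pow_div_sqrt_succ_le hξ hξ1
    _ ≤ 9 * √(c / ξ) := by
        rw [sqrt_div hc.le, mul_div_left_comm]
        gcongr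
        norm_num

theorem stmt2 (ω : ℕ → ℝ) (c ξ : ℝ) (hc : 0 < c) (hξ : 0 < ξ) (hξ1 : ξ ≤ 1)
    (hnn : ∀ i, 0 ≤ ω i) (hb : ∀ i : ℕ, ω i ≤ c * Real.exp (-ξ * i)) :
    Summable (fun i : ℕ => Real.sqrt (ω i / ((i : ℝ) + 1))) ∧
      ∑' i : ℕ, Real.sqrt (ω i / ((i : ℝ) + 1)) ≤ 9 * Real.sqrt (c / ξ) :=
  stmt2_general ω c ξ hc hξ hξ1 hb
end

section
/- Let (ω(i))_{i≥0} be non-negative with ω(i) ≤ c·min(e^{-ξ i}, 1/(i+1)) for all i ≥ 0, where c > 0 and 0 < ξ ≤ 1. Then ∑_{i=0}^∞ sqrt(ω(i)/(i+1)) ≤ 14·sqrt(c)·ln(2/ξ). -/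
/-!
Each term is at most `√c / (i + 1)` and at most `√c · r ^ i` with `r = exp (-ξ / 2)`. Split the sum
at `N = ⌈4 / ξ²⌉`: the head is at most `√c · H_N ≤ √c (1 + log N)`, and the geometric tail is at
most `√c · r ^ N / (1 - r) ≤ √c · (ξ / 2) / (ξ / 4) = 2 √c`. Since `N ≤ 5 / ξ²`, this gives
`√c (3 + log 5 + 2 log (1 / ξ)) ≤ 14 √c log (2 / ξ)`.
-/

open Real Finset

section HarmonicGeometric

variable {f : ℕ → ℝ} {A r : ℝ}

lemma sum_range_le_mul_one_add_log_of_le_div_succ (hA : 0 ≤ A)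
    (hf : ∀ i : ℕ, f i ≤ A / (i + 1)) (N : ℕ) :
    ∑ i ∈ range N, f i ≤ A * (1 + log N) := by
  have hharm : ∑ i ∈ range N, A / ((i : ℝ) + 1) = A * harmonic N := by
    simp [harmonic, Finset.mul_sum, div_eq_mul_inv]
  calc ∑ i ∈ range N, f i ≤ ∑ i ∈ range N, A / ((i : ℝ) + 1) := sum_le_sum fun i _ ↦ hf i
    _ = A * harmonic N := hharm
    _ ≤ A * (1 + log N) := mul_le_mul_of_nonneg_left (harmonic_le_one_add_log N) hA

lemma tsum_nat_add_le_of_le_geometric (hf : ∀ i, 0 ≤ f i) (hr₀ : 0 ≤ r) (hr₁ : r < 1)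
    (hg : ∀ i, f i ≤ A * r ^ i) (N : ℕ) :
    ∑' i, f (i + N) ≤ A * r ^ N / (1 - r) := by
  have hgeom := summable_geometric_of_lt_one hr₀ hr₁
  calc ∑' i, f (i + N) ≤ ∑' i, A * r ^ N * r ^ i :=
        Summable.tsum_le_tsum (fun i ↦ (hg (i + N)).trans_eq (by ring))
          ((hgeom.mul_left A).of_nonneg_of_le hf hg |>.comp_injective (add_left_injective N))
          (hgeom.mul_left _)
    _ = A * r ^ N / (1 - r) := by
        rw [tsum_mul_left, tsum_geometric_of_lt_one hr₀ hr₁, div_eq_mul_inv]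

theorem summable_and_tsum_le_of_le_div_succ_of_le_geometric (hf : ∀ i, 0 ≤ f i) (hr₀ : 0 ≤ r)
    (hr₁ : r < 1) (hh : ∀ i : ℕ, f i ≤ A / (i + 1)) (hg : ∀ i, f i ≤ A * r ^ i) (N : ℕ) :
    Summable f ∧ ∑' i, f i ≤ A * (1 + log N) + A * r ^ N / (1 - r) := by
  have hA : 0 ≤ A := by simpa using (hf 0).trans (hh 0)
  have hsum : Summable f :=
    ((summable_geometric_of_lt_one hr₀ hr₁).mul_left A).of_nonneg_of_le hf hg
  refine ⟨hsum, ?_⟩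
  rw [← hsum.sum_add_tsum_nat_add N]
  exact add_le_add (sum_range_le_mul_one_add_log_of_le_div_succ hA hh N)
    (tsum_nat_add_le_of_le_geometric hf hr₀ hr₁ hg N)

end HarmonicGeometric

lemma sqrt_div_le_div_of_le_div {w c x : ℝ} (hx : 0 < x) (h : w ≤ c / x) :
    √(w / x) ≤ √c / x := by
  calc √(w / x) ≤ √(c / x ^ 2) := by
        rw [sq, ← div_div]; exact sqrt_le_sqrt (div_le_div_of_nonneg_right h hx.le)
    _ = √c / x := by rw [sqrt_div' c (sq_nonneg x), sqrt_sq hx.le]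

lemma sqrt_div_le_sqrt_mul_exp_half {w c x t : ℝ} (hw : 0 ≤ w) (hx : 1 ≤ x)
    (h : w ≤ c * exp t) : √(w / x) ≤ √c * exp (t / 2) := by
  calc √(w / x) ≤ √(c * exp t) := sqrt_le_sqrt ((div_le_self hw hx).trans h)
    _ = √c * exp (t / 2) := by rw [sqrt_mul' c (exp_pos t).le, exp_half]

lemma half_le_one_sub_exp_neg {x : ℝ} (hx₀ : 0 ≤ x) (hx₁ : x ≤ 1) : x / 2 ≤ 1 - exp (-x) := by
  have hinv : exp (-x) * exp x = 1 := by rw [← exp_add, neg_add_cancel, exp_zero]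
  nlinarith [add_one_le_exp x, exp_pos (-x)]

lemma exp_neg_half_pow_ceil_four_div_sq_le {ξ : ℝ} (hξ : 0 < ξ) :
    exp (-(ξ / 2)) ^ ⌈4 / ξ ^ 2⌉₊ ≤ ξ / 2 := by
  have hN : 2 / ξ ≤ ⌈4 / ξ ^ 2⌉₊ * (ξ / 2) :=
    calc 2 / ξ = 4 / ξ ^ 2 * (ξ / 2) := by field_simp; ring
      _ ≤ ⌈4 / ξ ^ 2⌉₊ * (ξ / 2) := by gcongr; exact Nat.le_ceil _
  calc exp (-(ξ / 2)) ^ ⌈4 / ξ ^ 2⌉₊ ≤ exp (-(2 / ξ)) := by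
        rw [← exp_nat_mul, exp_le_exp]; linarith
    _ ≤ (2 / ξ + 1)⁻¹ := by rw [exp_neg]; gcongr; exact add_one_le_exp _
    _ ≤ (2 / ξ)⁻¹ := by gcongr; linarith
    _ = ξ / 2 := inv_div 2 ξ

lemma log_ceil_four_div_sq_le {ξ : ℝ} (hξ₀ : 0 < ξ) (hξ₁ : ξ ≤ 1) :
    log ⌈4 / ξ ^ 2⌉₊ ≤ log 5 - 2 * log ξ := by
  have hξ2 : ξ ^ 2 ≤ 1 := pow_le_one₀ hξ₀.le hξ₁
  have hpos : (0 : ℝ) < ⌈4 / ξ ^ 2⌉₊ :=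
    (by positivity : (0 : ℝ) < 4 / ξ ^ 2).trans_le (Nat.le_ceil _)
  have hle : (⌈4 / ξ ^ 2⌉₊ : ℝ) ≤ 5 / ξ ^ 2 :=
    calc (⌈4 / ξ ^ 2⌉₊ : ℝ) ≤ 4 / ξ ^ 2 + 1 := (Nat.ceil_lt_add_one (by positivity)).le
      _ ≤ 4 / ξ ^ 2 + 1 / ξ ^ 2 := by gcongr; exact one_le_one_div (by positivity) hξ2
      _ = 5 / ξ ^ 2 := by ring
  calc log ⌈4 / ξ ^ 2⌉₊ ≤ log (5 / ξ ^ 2) := log_le_log hpos hle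
    _ = log 5 - 2 * log ξ := by
        rw [log_div (by norm_num) (by positivity), log_pow]; push_cast; ring

lemma exp_neg_half_pow_ceil_div_one_sub_le_two {ξ : ℝ} (hξ₀ : 0 < ξ) (hξ₁ : ξ ≤ 1) :
    exp (-(ξ / 2)) ^ ⌈4 / ξ ^ 2⌉₊ / (1 - exp (-(ξ / 2))) ≤ 2 := by
  have hgap : ξ / 4 ≤ 1 - exp (-(ξ / 2)) := by
    linarith [half_le_one_sub_exp_neg (x := ξ / 2) (by positivity) (by linarith)]
  calc exp (-(ξ / 2)) ^ ⌈4 / ξ ^ 2⌉₊ / (1 - exp (-(ξ / 2))) ≤ (ξ / 2) / (ξ / 4) := by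
        gcongr; exact exp_neg_half_pow_ceil_four_div_sq_le hξ₀
    _ = 2 := by field_simp; norm_num

lemma three_add_log_ceil_four_div_sq_le {ξ : ℝ} (hξ₀ : 0 < ξ) (hξ₁ : ξ ≤ 1) :
    3 + log ⌈4 / ξ ^ 2⌉₊ ≤ 14 * log (2 / ξ) := by
  have hlog5 : log 5 ≤ 4 := by linarith [log_le_sub_one_of_pos (show (0 : ℝ) < 5 by norm_num)]
  rw [log_div two_ne_zero hξ₀.ne']
  linarith [log_ceil_four_div_sq_le hξ₀ hξ₁, log_nonpos hξ₀.le hξ₁, log_two_gt_d9]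

theorem stmt4 (ω : ℕ → ℝ) (c ξ : ℝ) (hc : 0 < c) (hξ : 0 < ξ) (hξ1 : ξ ≤ 1)
    (hnn : ∀ i, 0 ≤ ω i)
    (hb : ∀ i : ℕ, ω i ≤ c * min (Real.exp (-ξ * i)) (1 / ((i : ℝ) + 1))) :
    Summable (fun i : ℕ => Real.sqrt (ω i / ((i : ℝ) + 1))) ∧
      ∑' i : ℕ, Real.sqrt (ω i / ((i : ℝ) + 1)) ≤ 14 * Real.sqrt c * Real.log (2 / ξ) := by
  have hharm (i : ℕ) : √(ω i / (i + 1)) ≤ √c / (i + 1) := by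
    have hω : ω i ≤ c / (i + 1) :=
      (hb i).trans <| (mul_le_mul_of_nonneg_left (min_le_right _ _) hc.le).trans_eq
        (mul_one_div _ _)
    exact sqrt_div_le_div_of_le_div (by positivity) hω
  have hgeom (i : ℕ) : √(ω i / (i + 1)) ≤ √c * exp (-(ξ / 2)) ^ i := by
    have hω : ω i ≤ c * exp (-ξ * i) :=
      (hb i).trans (mul_le_mul_of_nonneg_left (min_le_left _ _) hc.le)
    calc √(ω i / (i + 1)) ≤ √c * exp (-ξ * i / 2) :=
          sqrt_div_le_sqrt_mul_exp_half (hnn i) (by simp) hω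
      _ = √c * exp (-(ξ / 2)) ^ i := by rw [← exp_nat_mul]; ring_nf
  obtain ⟨hsum, hle⟩ := summable_and_tsum_le_of_le_div_succ_of_le_geometric
    (fun i ↦ sqrt_nonneg _) (exp_pos _).le (exp_lt_one_iff.mpr (by linarith)) hharm hgeom
    ⌈4 / ξ ^ 2⌉₊
  refine ⟨hsum, hle.trans ?_⟩
  calc √c * (1 + log ⌈4 / ξ ^ 2⌉₊) + √c * exp (-(ξ / 2)) ^ ⌈4 / ξ ^ 2⌉₊ / (1 - exp (-(ξ / 2)))
      ≤ √c * (1 + log ⌈4 / ξ ^ 2⌉₊) + √c * 2 := by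
        rw [mul_div_assoc]; gcongr; exact exp_neg_half_pow_ceil_div_one_sub_le_two hξ hξ1
    _ = √c * (3 + log ⌈4 / ξ ^ 2⌉₊) := by ring
    _ ≤ √c * (14 * log (2 / ξ)) := by gcongr; exact three_add_log_ceil_four_div_sq_le hξ hξ1
    _ = 14 * √c * log (2 / ξ) := by ring
end

section
/- Let X₀ ∈ F and let (Uᵢ)_{i∈ℤ} be i.i.d. random variables with values in F', with g : F × F' → F measurable. Define X_{i,m} := G_{i+m}(X₀; U_{-m},…,U_{i-1}) where G is the iterated application of g. Then for integers n, m, m' with n ≥ -m and n ≥ -m', the pair (X_{n,m}, X_{n,m'}) has the same distribution as (X_{n+m}, X_{n+m, m'-m}), where X_j := X_{j,0}. -/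
/-!
Take `b ≤ -m, -m'`. Both pairs are the same measurable function `T` of a window
`(U_{c+k})_{k ∈ ℕ}` of the noise: with `c = b` for `(X_{n,m}, X_{n,m'})` and with `c = b + m` for
`(X_{n+m}, X_{n+m,m'-m})`. Since the `Uᵢ` are i.i.d., every such window has the law of the infinite
product of the law of `U₀`, independently of `c`.
-/

open MeasureTheory ProbabilityTheory

/-- Iterated application of the driving map: `iterG g i x u = Gᵢ(x; u₀, …, u_{i-1})`. -/
noncomputable def iterG {F F' : Type*} (g : F → F' → F) : ℕ → F → (ℕ → F') → F
  | 0, x, _ => x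
  | i + 1, x, u => g (iterG g i x u) (u i)

theorem measurable_iterG {F F' : Type*} [MeasurableSpace F] [MeasurableSpace F']
    {g : F → F' → F} (hg : Measurable (Function.uncurry g)) (i : ℕ) (x : F) :
    Measurable (iterG g i x) := by
  induction i with
  | zero => exact measurable_const
  | succ i ih => exact hg.comp (ih.prodMk (measurable_pi_apply i))

theorem ProbabilityTheory.iIndepFun.map_comp_eq_map_comp {ι κ Ω β : Type*} [MeasurableSpace Ω]
    [MeasurableSpace β] {P : Measure Ω} {X : ι → Ω → β} (hX : ∀ i, Measurable (X i))
    (h : iIndepFun X P) {μ : Measure β} (hμ : ∀ i, P.map (X i) = μ) {φ ψ : κ → ι}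
    (hφ : φ.Injective) (hψ : ψ.Injective) :
    P.map (fun ω k => X (φ k) ω) = P.map (fun ω k => X (ψ k) ω) := by
  rw [(h.precomp hφ).map_fun_eq_infinitePi_map fun k => hX (φ k),
    (h.precomp hψ).map_fun_eq_infinitePi_map fun k => hX (ψ k)]
  simp only [hμ]

theorem stmt6_general {Ω F F' : Type*} [MeasurableSpace Ω] [MeasurableSpace F] [MeasurableSpace F']
    (P : Measure Ω)
    (g : F → F' → F) (hg : Measurable (Function.uncurry g))
    (U : ℤ → Ω → F') (hU : ∀ i, Measurable (U i))
    (hindep : iIndepFun U P)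
    (hident : ∀ i, Measure.map (U i) P = Measure.map (U 0) P)
    (x0 : F)
    (X : ℤ → ℤ → Ω → F)
    (hX : ∀ n m ω, X n m ω = iterG g (n + m).toNat x0 (fun j => U ((j : ℤ) - m) ω))
    (n m m' : ℤ) :
    Measure.map (fun ω => (X n m ω, X n m' ω)) P
      = Measure.map (fun ω => (X (n + m) 0 ω, X (n + m) (m' - m) ω)) P := by
  obtain ⟨b, hbm, hbm'⟩ : ∃ b, b ≤ -m ∧ b ≤ -m' :=
    ⟨min (-m) (-m'), min_le_left .., min_le_right ..⟩
  let T : (ℕ → F') → F × F := fun v =>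
    (iterG g (n + m).toNat x0 (fun j => v (j + (-m - b).toNat)),
      iterG g (n + m').toNat x0 (fun j => v (j + (-m' - b).toNat)))
  have hT : Measurable T :=
    ((measurable_iterG hg _ x0).comp (by fun_prop)).prodMk
      ((measurable_iterG hg _ x0).comp (by fun_prop))
  have hwindow (c : ℤ) : Measurable fun ω (k : ℕ) => U (c + k) ω := by fun_prop
  have hinj (c : ℤ) : Function.Injective fun k : ℕ => c + (k : ℤ) :=
    (add_right_injective c).comp Nat.cast_injective
  have hL : (fun ω => (X n m ω, X n m' ω)) = T ∘ fun ω (k : ℕ) => U (b + k) ω := by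
    funext ω
    simp only [hX, T, Function.comp_apply, Prod.mk.injEq]
    constructor <;> congr! 3 with j <;> omega
  have hR : (fun ω => (X (n + m) 0 ω, X (n + m) (m' - m) ω))
      = T ∘ fun ω (k : ℕ) => U (b + m + k) ω := by
    funext ω
    simp only [hX, T, Function.comp_apply, add_zero, add_add_sub_cancel, Prod.mk.injEq]
    constructor <;> congr! 3 with j <;> omega
  rw [hL, hR, ← Measure.map_map hT (hwindow b), ← Measure.map_map hT (hwindow (b + m)),
    hindep.map_comp_eq_map_comp hU hident (hinj b) (hinj (b + m))]

theorem stmt6 {Ω F F' : Type*} [MeasurableSpace Ω] [MeasurableSpace F] [MeasurableSpace F']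
    (P : Measure Ω) [IsProbabilityMeasure P]
    (g : F → F' → F) (hg : Measurable (Function.uncurry g))
    (U : ℤ → Ω → F') (hU : ∀ i, Measurable (U i))
    (hindep : iIndepFun U P)
    (hident : ∀ i, Measure.map (U i) P = Measure.map (U 0) P)
    (x0 : F)
    (X : ℤ → ℤ → Ω → F)
    (hX : ∀ n m ω, X n m ω = iterG g (n + m).toNat x0 (fun j => U ((j : ℤ) - m) ω))
    (n m m' : ℤ) (h1 : -m ≤ n) (h2 : -m' ≤ n) :
    Measure.map (fun ω => (X n m ω, X n m' ω)) P
      = Measure.map (fun ω => (X (n + m) 0 ω, X (n + m) (m' - m) ω)) P :=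
  stmt6_general P g hg U hU hindep hident x0 X hX n m m'
end

section
/- Let (Y_l)_{l≥0} be square-integrable real random variables with E[Y_l] → μ_Y, let (p_l)_{l≥0} be a probability distribution on ℕ with p_l > 0 for all l, and let N be independent of (Y_l) with P(N = l) = p_l. Set Y_{-1} = 0 and Z := (Y_N − Y_{N-1})/p_N. If ∑_{l=0}^∞ E[(Y_l − Y_{l-1})²]/p_l < ∞, then Z is square-integrable, E[Z] = μ_Y, and E[Z²] = ∑_{l=0}^∞ E[(Y_l − Y_{l-1})²]/p_l. -/
/-
On the event `{N = l}` the estimator `Z` equals `D l / p l`, and independence of `N` from the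
sequence `Y` gives `∫_{N = l} g (D l) = p l * ∫ g (D l)`. Summing over `l`, the second moment of
`Z` is `∑ ∫ (D l)² / p l`, which is finite, so `Z ∈ L²`; then `∫ Z = ∑ ∫ D l`, whose partial sums
telescope to `∫ Y n → μY`.
-/

open MeasureTheory ProbabilityTheory

lemma iUnion_preimage_singleton_eq_univ {α β : Type*} (f : α → β) :
    ⋃ b, f ⁻¹' {b} = Set.univ :=
  Set.eq_univ_of_forall fun a => Set.mem_iUnion.2 ⟨f a, rfl⟩

lemma eqOn_fiber {Ω ι E : Type*} (N : Ω → ι) (F : ι → Ω → E) (i : ι) :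
    Set.EqOn (fun ω => F (N ω) ω) (F i) (N ⁻¹' {i}) :=
  fun ω (hω : N ω = i) => congrArg (F · ω) hω

def backwardDiff (l : ℕ) (v : ℕ → ℝ) : ℝ := v l - if l = 0 then 0 else v (l - 1)

lemma measurable_backwardDiff (l : ℕ) : Measurable (backwardDiff l) := by
  unfold backwardDiff
  split_ifs
  · exact (measurable_pi_apply l).sub measurable_const
  · exact (measurable_pi_apply l).sub (measurable_pi_apply (l - 1))

lemma sum_range_succ_backwardDiff (v : ℕ → ℝ) (n : ℕ) :
    ∑ l ∈ Finset.range (n + 1), backwardDiff l v = v n := by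
  induction n with
  | zero => simp [backwardDiff]
  | succ n ih => rw [Finset.sum_range_succ, ih]; simp [backwardDiff]

section

variable {Ω : Type*} [MeasurableSpace Ω] {μ : Measure Ω}

lemma ProbabilityTheory.IndepFun.setIntegral_preimage_comp {β γ : Type*} [MeasurableSpace β]
    [MeasurableSpace γ] {N : Ω → β} {X : Ω → γ} (h : IndepFun N X μ) (hN : Measurable N)
    (hX : AEMeasurable X μ) {s : Set β} (hs : MeasurableSet s) {φ : γ → ℝ} (hφ : Measurable φ) :
    ∫ ω in N ⁻¹' s, φ (X ω) ∂μ = μ.real (N ⁻¹' s) * ∫ ω, φ (X ω) ∂μ := by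
  have hind : Measurable (s.indicator (1 : β → ℝ)) := measurable_one.indicator hs
  have hprod : (N ⁻¹' s).indicator (φ ∘ X) = (s.indicator 1 ∘ N) * (φ ∘ X) := by
    ext ω
    by_cases hω : N ω ∈ s <;> simp [hω]
  calc ∫ ω in N ⁻¹' s, φ (X ω) ∂μ = ∫ ω, ((s.indicator (1 : β → ℝ) ∘ N) * (φ ∘ X)) ω ∂μ := by
        rw [← hprod, integral_indicator (hN hs)]; rfl
    _ = μ.real (N ⁻¹' s) * ∫ ω, φ (X ω) ∂μ := by
        rw [(h.comp hind hφ).integral_mul_eq_mul_integral (hind.comp hN).aestronglyMeasurable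
          (hφ.comp_aemeasurable hX).aestronglyMeasurable, ← integral_indicator_one (hN hs)]
        rfl

section Fibers

variable {ι E : Type*} [Countable ι] [MeasurableSpace ι] [MeasurableSingletonClass ι]
  [NormedAddCommGroup E] {N : Ω → ι} {F : ι → Ω → E}

lemma aestronglyMeasurable_of_fibers (hN : Measurable N) (hF : ∀ i, AEStronglyMeasurable (F i) μ) :
    AEStronglyMeasurable (fun ω => F (N ω) ω) μ := by
  rw [← Measure.restrict_univ (μ := μ), ← iUnion_preimage_singleton_eq_univ N]
  exact AEStronglyMeasurable.iUnion fun i =>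
    (hF i).restrict.congr ((ae_restrict_iff' (hN (measurableSet_singleton i))).2
      (ae_of_all _ fun ω hω => (eqOn_fiber N F i hω).symm))

lemma integrable_of_summable_setIntegral_norm_fibers (hN : Measurable N)
    (hF : ∀ i, IntegrableOn (F i) (N ⁻¹' {i}) μ)
    (hsum : Summable fun i => ∫ ω in N ⁻¹' {i}, ‖F i ω‖ ∂μ) :
    Integrable (fun ω => F (N ω) ω) μ := by
  have hmeas i := hN (measurableSet_singleton i)
  rw [← integrableOn_univ, ← iUnion_preimage_singleton_eq_univ N]
  refine integrableOn_iUnion_of_summable_integral_norm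
    (fun i => (hF i).congr_fun (eqOn_fiber N F i).symm (hmeas i)) ?_
  convert hsum using 2 with i
  exact setIntegral_congr_fun (hmeas i) fun ω hω => congrArg norm (eqOn_fiber N F i hω)

lemma hasSum_setIntegral_fibers [NormedSpace ℝ E] (hN : Measurable N)
    (hint : Integrable (fun ω => F (N ω) ω) μ) :
    HasSum (fun i => ∫ ω in N ⁻¹' {i}, F i ω ∂μ) (∫ ω, F (N ω) ω ∂μ) := by
  have hmeas i := hN (measurableSet_singleton i)
  have h := hasSum_integral_iUnion hmeas (pairwise_disjoint_fiber N) hint.integrableOn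
  rw [iUnion_preimage_singleton_eq_univ, setIntegral_univ] at h
  convert h using 2 with i
  exact (setIntegral_congr_fun (hmeas i) (eqOn_fiber N F i)).symm

end Fibers

lemma memLp_two_of_summable_setIntegral_sq_fibers {ι : Type*} [Countable ι] [MeasurableSpace ι]
    [MeasurableSingletonClass ι] {N : Ω → ι} {F : ι → Ω → ℝ} (hN : Measurable N)
    (hF : ∀ i, MemLp (F i) 2 μ) (hsum : Summable fun i => ∫ ω in N ⁻¹' {i}, F i ω ^ 2 ∂μ) :
    MemLp (fun ω => F (N ω) ω) 2 μ := by
  refine (memLp_two_iff_integrable_sq (aestronglyMeasurable_of_fibers hN fun i => (hF i).1)).2 ?_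
  refine integrable_of_summable_setIntegral_norm_fibers (F := fun i ω => F i ω ^ 2) hN
    (fun i => (hF i).integrable_sq.integrableOn) ?_
  simpa only [Real.norm_of_nonneg (sq_nonneg _)] using hsum

lemma memLp_backwardDiff {Y : ℕ → Ω → ℝ} {q : ENNReal} (hY : ∀ l, MemLp (Y l) q μ) (l : ℕ) :
    MemLp (fun ω => backwardDiff l (fun k => Y k ω)) q μ := by
  cases l with
  | zero => simpa [backwardDiff] using hY 0
  | succ l => exact (hY (l + 1)).sub (hY l)

lemma sum_range_succ_integral_backwardDiff {Y : ℕ → Ω → ℝ} (hY : ∀ l, Integrable (Y l) μ)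
    (n : ℕ) :
    ∑ l ∈ Finset.range (n + 1), ∫ ω, backwardDiff l (fun k => Y k ω) ∂μ = ∫ ω, Y n ω ∂μ := by
  have hD l := memLp_one_iff_integrable.1 <|
    memLp_backwardDiff (fun k => memLp_one_iff_integrable.2 (hY k)) l
  rw [← integral_finsetSum _ fun l _ => hD l]
  simp only [sum_range_succ_backwardDiff]

lemma tendsto_integral_of_hasSum_integral_backwardDiff {Y : ℕ → Ω → ℝ}
    (hY : ∀ l, Integrable (Y l) μ) {a : ℝ}
    (h : HasSum (fun l => ∫ ω, backwardDiff l (fun k => Y k ω) ∂μ) a) :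
    Filter.Tendsto (fun n => ∫ ω, Y n ω ∂μ) Filter.atTop (nhds a) := by
  simpa only [Function.comp_def, sum_range_succ_integral_backwardDiff hY]
    using h.tendsto_sum_nat.comp (Filter.tendsto_add_atTop_nat 1)

lemma setIntegral_preimage_singleton_comp_backwardDiff {Y : ℕ → Ω → ℝ}
    (hY : ∀ l, AEMeasurable (Y l) μ) {N : Ω → ℕ} (hN : Measurable N)
    (hNindep : IndepFun N (fun ω (l : ℕ) => Y l ω) μ) {l : ℕ} {φ : ℝ → ℝ} (hφ : Measurable φ) :
    ∫ ω in N ⁻¹' {l}, φ (backwardDiff l (fun k => Y k ω)) ∂μ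
      = μ.real (N ⁻¹' {l}) * ∫ ω, φ (backwardDiff l (fun k => Y k ω)) ∂μ :=
  hNindep.setIntegral_preimage_comp (φ := fun v => φ (backwardDiff l v)) hN
    (aemeasurable_pi_lambda _ hY) (measurableSet_singleton l) (hφ.comp (measurable_backwardDiff l))

end

theorem stmt14_general {Ω : Type*} [MeasurableSpace Ω] (P : Measure Ω) [IsProbabilityMeasure P]
    (Y : ℕ → Ω → ℝ) (hY : ∀ l, MemLp (Y l) 2 P)
    (μY : ℝ) (hlim : Filter.Tendsto (fun l : ℕ => ∫ ω, Y l ω ∂P) Filter.atTop (nhds μY))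
    (p : ℕ → ℝ) (hp : ∀ l, 0 < p l)
    (N : Ω → ℕ) (hN : Measurable N)
    (hNdist : ∀ l : ℕ, P {ω | N ω = l} = ENNReal.ofReal (p l))
    (hNindep : IndepFun N (fun ω (l : ℕ) => Y l ω) P)
    -- differences `D l = Y l − Y (l−1)`, with the convention `Y (−1) = 0`
    (D : ℕ → Ω → ℝ) (hD : ∀ l ω, D l ω = Y l ω - (if l = 0 then 0 else Y (l - 1) ω))
    (Z : Ω → ℝ) (hZ : ∀ ω, Z ω = D (N ω) ω / p (N ω))
    (hfin : Summable (fun l : ℕ => (∫ ω, (D l ω) ^ 2 ∂P) / p l)) :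
    MemLp Z 2 P ∧ (∫ ω, Z ω ∂P) = μY ∧
      (∫ ω, (Z ω) ^ 2 ∂P) = ∑' l : ℕ, (∫ ω, (D l ω) ^ 2 ∂P) / p l := by
  have hDX : ∀ l ω, D l ω = backwardDiff l (fun k => Y k ω) := hD
  have hD2 l : MemLp (D l) 2 P := by simpa only [← hDX] using memLp_backwardDiff hY l
  have hfiber (l : ℕ) {φ : ℝ → ℝ} (hφ : Measurable φ) :
      ∫ ω in N ⁻¹' {l}, φ (D l ω) ∂P = p l * ∫ ω, φ (D l ω) ∂P := by
    simp only [hDX]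
    rw [setIntegral_preimage_singleton_comp_backwardDiff
      (fun l => (hY l).aestronglyMeasurable.aemeasurable) hN hNindep hφ, measureReal_def,
      show P (N ⁻¹' {l}) = _ from hNdist l, ENNReal.toReal_ofReal (hp l).le]
  have hmean l : ∫ ω in N ⁻¹' {l}, D l ω / p l ∂P = ∫ ω, D l ω ∂P := by
    rw [hfiber l (φ := (· / p l)) (measurable_id.div_const _), integral_div]
    exact mul_div_cancel₀ _ (hp l).ne'
  have hsq l : ∫ ω in N ⁻¹' {l}, (D l ω / p l) ^ 2 ∂P = (∫ ω, D l ω ^ 2 ∂P) / p l := by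
    rw [hfiber l (φ := fun x => (x / p l) ^ 2) ((measurable_id.div_const _).pow_const 2)]
    simp only [div_pow, integral_div]
    field_simp [(hp l).ne']
  obtain rfl : Z = fun ω => D (N ω) ω / p (N ω) := funext hZ
  have hZ2 : MemLp (fun ω => D (N ω) ω / p (N ω)) 2 P :=
    memLp_two_of_summable_setIntegral_sq_fibers (F := fun l ω => D l ω / p l) hN
      (fun l => (hD2 l).mul_const (p l)⁻¹) (by simpa only [hsq] using hfin)
  refine ⟨hZ2, ?_, ?_⟩
  · have hsum := hasSum_setIntegral_fibers (F := fun l ω => D l ω / p l) hN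
      (hZ2.integrable one_le_two)
    simp only [hmean] at hsum
    refine tendsto_nhds_unique (tendsto_integral_of_hasSum_integral_backwardDiff
      (fun l => (hY l).integrable one_le_two) ?_) hlim
    simpa only [← hDX] using hsum
  · rw [← tsum_congr hsq]
    exact (hasSum_setIntegral_fibers (F := fun l ω => (D l ω / p l) ^ 2) hN
      hZ2.integrable_sq).tsum_eq.symm

theorem stmt14 {Ω : Type*} [MeasurableSpace Ω] (P : Measure Ω) [IsProbabilityMeasure P]
    (Y : ℕ → Ω → ℝ) (hY : ∀ l, MemLp (Y l) 2 P)
    (μY : ℝ) (hlim : Filter.Tendsto (fun l : ℕ => ∫ ω, Y l ω ∂P) Filter.atTop (nhds μY))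
    (p : ℕ → ℝ) (hp : ∀ l, 0 < p l) (hp1 : ∑' l : ℕ, p l = 1)
    (N : Ω → ℕ) (hN : Measurable N)
    (hNdist : ∀ l : ℕ, P {ω | N ω = l} = ENNReal.ofReal (p l))
    (hNindep : IndepFun N (fun ω (l : ℕ) => Y l ω) P)
    -- differences `D l = Y l − Y (l−1)`, with the convention `Y (−1) = 0`
    (D : ℕ → Ω → ℝ) (hD : ∀ l ω, D l ω = Y l ω - (if l = 0 then 0 else Y (l - 1) ω))
    (Z : Ω → ℝ) (hZ : ∀ ω, Z ω = D (N ω) ω / p (N ω))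
    (hfin : Summable (fun l : ℕ => (∫ ω, (D l ω) ^ 2 ∂P) / p l)) :
    MemLp Z 2 P ∧ (∫ ω, Z ω ∂P) = μY ∧
      (∫ ω, (Z ω) ^ 2 ∂P) = ∑' l : ℕ, (∫ ω, (D l ω) ^ 2 ∂P) / p l :=
  stmt14_general P Y hY μY hlim p hp N hN hNdist hNindep D hD Z hZ hfin
end
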